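/- For sequences of constants x, y from {⊤,⊥} and sequences of classical formulas a, b, the inclusion atom xy ⊆ ab is semantically equivalent to x ⊆ a ∧ ((y ⊆ b ∧ a^x) ∨ ¬a^x). -/

import Mathlib

structure KModel (W : Type) where
  R : W → W → Prop
  V : ℕ → Set W

inductive MF : Type
  | prop : ℕ → MF
  | bot : MF
  | neg : MF → MF
  | or : MF → MF → MF
  | and : MF → MF → MF
  | dia : MF → MF
  | box : MF → MF

def MF.top : MF := MF.neg MF.bot

def wSat {W : Type} (M : KModel W) : W → MF → Prop
  | w, .prop p => w ∈ M.V p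
  | _, .bot => False
  | w, .neg a => ¬ wSat M w a
  | w, .or a b => wSat M w a ∨ wSat M w b
  | w, .and a b => wSat M w a ∧ wSat M w b
  | w, .dia a => ∃ v, M.R w v ∧ wSat M v a
  | w, .box a => ∀ v, M.R w v → wSat M v a

inductive IncForm : Type
  | prop : ℕ → IncForm
  | bot : IncForm
  | incl : List MF → List MF → IncForm
  | neg : MF → IncForm
  | or : IncForm → IncForm → IncForm
  | and : IncForm → IncForm → IncForm
  | dia : IncForm → IncForm
  | box : IncForm → IncForm

/-- image R[T] -/
def img {W : Type} (M : KModel W) (T : Set W) : Set W := {v | ∃ w ∈ T, M.R w v}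

/-- successor team relation: S ⊆ R[T] and T ⊆ R⁻¹[S] -/
def succTeam {W : Type} (M : KModel W) (T S : Set W) : Prop :=
  (∀ v ∈ S, ∃ w ∈ T, M.R w v) ∧ (∀ w ∈ T, ∃ v ∈ S, M.R w v)

def TSat {W : Type} (M : KModel W) : Set W → IncForm → Prop
  | T, .prop p => T ⊆ M.V p
  | T, .bot => T = ∅
  | T, .incl as bs => ∀ w ∈ T, ∃ v ∈ T, ∀ i, ∀ (h1 : i < as.length) (h2 : i < bs.length),
      (wSat M w (as.get ⟨i, h1⟩) ↔ wSat M v (bs.get ⟨i, h2⟩))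
  | T, .neg a => ∀ w ∈ T, ¬ wSat M w a
  | T, .or f g => ∃ T1 T2, T1 ∪ T2 = T ∧ TSat M T1 f ∧ TSat M T2 g
  | T, .and f g => TSat M T f ∧ TSat M T g
  | T, .dia f => ∃ S, succTeam M T S ∧ TSat M S f
  | T, .box f => TSat M (img M T) f

/-- embedding of classical formulas into ML(⊆) -/
def toInc : MF → IncForm
  | .prop p => .prop p
  | .bot => .bot
  | .neg a => .neg a
  | .or a b => .or (toInc a) (toInc b)
  | .and a b => .and (toInc a) (toInc b)
  | .dia a => .dia (toInc a)
  | .box a => .box (toInc a)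

/-- translate a Boolean constant to ⊤ or ⊥ -/
def ofBool : Bool → MF := fun x => if x then MF.top else MF.bot

/-- α^⊤ = α, α^⊥ = ¬α -/
def signed : Bool → MF → MF := fun x a => if x then a else a.neg

/-- a^x = α₁^{x₁} ∧ ... ∧ αₙ^{xₙ} -/
def conjSigned (xs : List Bool) (as : List MF) : MF :=
  (List.zipWith signed xs as).foldr MF.and MF.top

/-! Write `v ⊨ aˣ` for a world realizing the values `x` on the formulas `a`. Since `x` and `y`
are constants, `T ⊨ xy ⊆ ab` says that every world of `T` has a witness in `T` realizing both
`aˣ` and `bʸ`. For the converse, split `T` into its `aˣ`-worlds `T₁` and the rest `T₂`: the witness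
that `x ⊆ a` provides realizes `aˣ`, so it lies in `T₁`, and `T₁ ⊨ y ⊆ b` gives a witness in `T₁`,
which realizes `aˣ` and `bʸ`. -/

lemma List.forall_mem_zip_iff_getElem {α β : Type*} {P : α × β → Prop} {l : List α} {l' : List β} :
    (∀ p ∈ l.zip l', P p) ↔ ∀ i (h : i < l.length) (h' : i < l'.length), P (l[i], l'[i]) := by
  simp only [List.mem_iff_getElem, List.length_zip, List.getElem_zip, lt_min_iff]
  exact ⟨fun h i hi hi' => h _ ⟨i, ⟨hi, hi'⟩, rfl⟩, fun h _ ⟨i, ⟨hi, hi'⟩, hp⟩ => hp ▸ h i hi hi'⟩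

theorem forall_exists_mem_and_iff {α : Type*} {T : Set α} {P Q : α → Prop} :
    (∀ w ∈ T, ∃ v ∈ T, P v ∧ Q v) ↔
      (∀ w ∈ T, ∃ v ∈ T, P v) ∧ ∃ T₁ T₂ : Set α, T₁ ∪ T₂ = T ∧
        ((∀ w ∈ T₁, ∃ v ∈ T₁, Q v) ∧ ∀ w ∈ T₁, P w) ∧ ∀ w ∈ T₂, ¬ P w := by
  constructor
  · intro h
    refine ⟨fun w hw => (h w hw).imp fun v ⟨hv, hP, _⟩ => ⟨hv, hP⟩,
      T ∩ {w | P w}, T \ {w | P w}, Set.inter_union_sdiff T _, ⟨fun w hw => ?_, fun w hw => hw.2⟩,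
      fun w hw => hw.2⟩
    obtain ⟨v, hv, hP, hQ⟩ := h w hw.1
    exact ⟨v, ⟨hv, hP⟩, hQ⟩
  · rintro ⟨hP, T₁, T₂, rfl, ⟨hQ, hP₁⟩, hP₂⟩ w hw
    obtain ⟨v, hv, hPv⟩ := hP w hw
    have hv₁ : v ∈ T₁ := hv.resolve_right fun hv₂ => hP₂ v hv₂ hPv
    obtain ⟨u, hu, hQu⟩ := hQ v hv₁
    exact ⟨u, .inl hu, hP₁ u hu, hQu⟩

section Semantics

variable {W : Type} (M : KModel W)

lemma TSat_and (T : Set W) (φ ψ : IncForm) : TSat M T (.and φ ψ) ↔ TSat M T φ ∧ TSat M T ψ :=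
  Iff.rfl

lemma TSat_or (T : Set W) (φ ψ : IncForm) :
    TSat M T (.or φ ψ) ↔ ∃ T₁ T₂, T₁ ∪ T₂ = T ∧ TSat M T₁ φ ∧ TSat M T₂ ψ :=
  Iff.rfl

lemma TSat_neg (T : Set W) (a : MF) : TSat M T (.neg a) ↔ ∀ w ∈ T, ¬ wSat M w a :=
  Iff.rfl

lemma wSat_ofBool (w : W) (x : Bool) : wSat M w (ofBool x) ↔ x = true := by
  cases x <;> simp [ofBool, MF.top, wSat]

lemma wSat_signed (w : W) (x : Bool) (a : MF) :
    wSat M w (signed x a) ↔ (x = true ↔ wSat M w a) := by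
  cases x <;> simp [signed, wSat]

/-- `Realizes M v xs as` is `v ⊨ asˣˢ`; as with `zip`, the lists are compared only up to the
shorter length. -/
def Realizes (v : W) (xs : List Bool) (as : List MF) : Prop :=
  ∀ p ∈ xs.zip as, p.1 = true ↔ wSat M v p.2

lemma realizes_append {v : W} {xs ys : List Bool} {as bs : List MF}
    (h : xs.length = as.length) :
    Realizes M v (xs ++ ys) (as ++ bs) ↔ Realizes M v xs as ∧ Realizes M v ys bs := by
  simp only [Realizes, List.zip_append h, List.forall_mem_append]

lemma wSat_conjSigned (v : W) (xs : List Bool) (as : List MF) :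
    wSat M v (conjSigned xs as) ↔ Realizes M v xs as := by
  induction xs generalizing as with
  | nil => simp [conjSigned, Realizes, MF.top, wSat]
  | cons x xs ih =>
    cases as with
    | nil => simp [conjSigned, Realizes, MF.top, wSat]
    | cons a as =>
      simp only [Realizes, List.zip_cons_cons, List.forall_mem_cons] at ih ⊢
      rw [← ih, ← wSat_signed]
      rfl

lemma TSat_incl_map_ofBool (T : Set W) (xs : List Bool) (as : List MF) :
    TSat M T (.incl (xs.map ofBool) as) ↔ ∀ w ∈ T, ∃ v ∈ T, Realizes M v xs as := by
  simp only [TSat, Realizes, List.forall_mem_zip_iff_getElem, List.get_eq_getElem,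
    List.getElem_map, List.length_map, wSat_ofBool]

lemma TSat_toInc (a : MF) : ∀ T : Set W, TSat M T (toInc a) ↔ ∀ w ∈ T, wSat M w a := by
  induction a with
  | prop p => exact fun T => Iff.rfl
  | bot => simp [toInc, TSat, wSat, Set.eq_empty_iff_forall_notMem]
  | neg a => exact fun T => Iff.rfl
  | and a b iha ihb => simp only [toInc, TSat, iha, ihb, wSat, forall₂_and, implies_true]
  | or a b iha ihb =>
    intro T
    simp only [toInc, TSat, iha, ihb, wSat]
    constructor
    · rintro ⟨T₁, T₂, rfl, h₁, h₂⟩ w (hw | hw)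
      exacts [.inl (h₁ w hw), .inr (h₂ w hw)]
    · intro h
      refine ⟨{w ∈ T | wSat M w a}, {w ∈ T | wSat M w b}, ?_, fun w hw => hw.2, fun w hw => hw.2⟩
      ext w
      simp only [Set.mem_union, Set.mem_sep_iff, ← and_or_left]
      exact ⟨And.left, fun hw => ⟨hw, h w hw⟩⟩
  | dia a ih =>
    intro T
    simp only [toInc, TSat, ih, wSat]
    constructor
    · rintro ⟨S, ⟨-, hS⟩, hSa⟩ w hw
      obtain ⟨v, hv, hR⟩ := hS w hw
      exact ⟨v, hR, hSa v hv⟩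
    · intro h
      refine ⟨{v | ∃ w ∈ T, M.R w v ∧ wSat M v a},
        ⟨fun v ⟨w, hw, hR, _⟩ => ⟨w, hw, hR⟩, fun w hw => ?_⟩, fun v ⟨_, _, _, hv⟩ => hv⟩
      obtain ⟨v, hR, hv⟩ := h w hw
      exact ⟨v, ⟨w, hw, hR, hv⟩, hR⟩
  | box a ih =>
    intro T
    simp only [toInc, TSat, ih, img, wSat]
    exact ⟨fun h w hw v hR => h v ⟨w, hw, hR⟩, fun h v ⟨w, hw, hR⟩ => h w hw v hR⟩

end Semantics

theorem stmt7_general {W : Type} (M : KModel W) (T : Set W)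
    (xs ys : List Bool) (as bs : List MF)
    (h1 : xs.length = as.length) :
    TSat M T (.incl ((xs ++ ys).map ofBool) (as ++ bs)) ↔
      TSat M T (.and (.incl (xs.map ofBool) as)
        (.or (.and (.incl (ys.map ofBool) bs) (toInc (conjSigned xs as)))
             (.neg (conjSigned xs as)))) := by
  simp only [TSat_and, TSat_or, TSat_neg, TSat_incl_map_ofBool, TSat_toInc, wSat_conjSigned,
    realizes_append M h1]
  exact forall_exists_mem_and_iff

theorem stmt7 {W : Type} (M : KModel W) (T : Set W)
    (xs ys : List Bool) (as bs : List MF)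
    (h1 : xs.length = as.length) (h2 : ys.length = bs.length) :
    TSat M T (.incl ((xs ++ ys).map ofBool) (as ++ bs)) ↔
      TSat M T (.and (.incl (xs.map ofBool) as)
        (.or (.and (.incl (ys.map ofBool) bs) (toInc (conjSigned xs as)))
             (.neg (conjSigned xs as)))) :=
  stmt7_general M T xs ys as bs h1
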